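/- Let A be a terminating ARRIVAL instance with edge set E, and let x̂ : E → ℕ be the run profile, assigning to each edge the number of times the run procedure traverses it. Then x̂ is a switching flow, and x̂ ≤ x componentwise for every switching flow x of A. In particular, x̂ is the unique minimizer of the total flow Σ_{e∈E} x_e over all switching flows. -/
import Mathlib


variable {V : Type} [Fintype V] [DecidableEq V]

/-- An ARRIVAL instance: origin `o` and two successor functions into `V ⊕ Bool`,
where `Sum.inr false` is the destination `d` and `Sum.inr true` is `d̄`. -/
structure Arrival (V : Type) where
  o : V
  sEven : V → V ⊕ Bool
  sOdd : V → V ⊕ Bool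

/-- Destination predicate. -/
def DestP {V : Type} : V ⊕ Bool → Prop := fun u => ∃ t, u = Sum.inr t

/-- Edge relation of the switch graph (proper edges only). -/
def Arrival.Edge (A : Arrival V) (u w : V ⊕ Bool) : Prop :=
  ∃ x : V, u = Sum.inl x ∧ (w = A.sEven x ∨ w = A.sOdd x)

/-- There is a directed walk of length `m` from `u` to a vertex satisfying `P`. -/
def Arrival.PathLen (A : Arrival V) (u : V ⊕ Bool) (P : V ⊕ Bool → Prop) (m : ℕ) : Prop :=
  ∃ f : ℕ → V ⊕ Bool, f 0 = u ∧ P (f m) ∧ ∀ i < m, A.Edge (f i) (f (i + 1))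

/-- `m` is the length of a shortest directed path from `u` to a vertex satisfying `P`. -/
def Arrival.ShortestLen (A : Arrival V) (u : V ⊕ Bool) (P : V ⊕ Bool → Prop) (m : ℕ) : Prop :=
  A.PathLen u P m ∧ ∀ m' < m, ¬ A.PathLen u P m'

/-- The instance is terminating: from every vertex a destination is reachable. -/
def Arrival.Terminating (A : Arrival V) : Prop :=
  ∀ v : V, ∃ m, A.PathLen (Sum.inl v) DestP m

/-- One step of the run procedure on states (position, switch configuration);
`false` means the current successor is the even one. Destinations are absorbing. -/
def Arrival.runStep [DecidableEq V] (A : Arrival V) :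
    (V ⊕ Bool) × (V → Bool) → (V ⊕ Bool) × (V → Bool) := fun s =>
  match s.1 with
  | Sum.inr _ => s
  | Sum.inl v => ((if s.2 v then A.sOdd v else A.sEven v),
      fun u => if u = v then !s.2 v else s.2 u)

/-- The state of the run procedure after `k` proper steps (the train starts at `o`). -/
def Arrival.run [DecidableEq V] (A : Arrival V) (k : ℕ) : (V ⊕ Bool) × (V → Bool) :=
  A.runStep^[k] (Sum.inl A.o, fun _ => false)

/-- A flow on the edges of the switch graph: value on the yard edge `(Y,o)` and on
the even/odd edge slot out of each vertex. -/
structure SFlow (V : Type) where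
  yard : ℕ
  ev : V → ℕ
  od : V → ℕ

/-- Outflow `x⁺(v)` at a vertex `v ∈ V`. -/
def SFlow.out {V : Type} (x : SFlow V) (v : V) : ℕ := x.ev v + x.od v

/-- Inflow `x⁻(u)` at a vertex `u` of the switch graph. -/
def SFlow.into (A : Arrival V) (x : SFlow V) (u : V ⊕ Bool) : ℕ :=
  (if Sum.inl A.o = u then x.yard else 0) +
    ∑ v : V, ((if A.sEven v = u then x.ev v else 0) + (if A.sOdd v = u then x.od v else 0))

/-- Total flow `Σ_e x_e`. -/
def SFlow.total [Fintype V] (x : SFlow V) : ℕ := x.yard + ∑ v : V, (x.ev v + x.od v)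

/-- Switching flow: unit outflow at the yard, flow conservation at every `v ∈ V`,
and switching behavior `x_{(v,s_even(v))} - x_{(v,s_odd(v))} ∈ {0,1}`. -/
def IsSwitchingFlow (A : Arrival V) (x : SFlow V) : Prop :=
  x.yard = 1 ∧ (∀ v : V, x.out v = SFlow.into A x (Sum.inl v)) ∧
    ∀ v : V, x.od v ≤ x.ev v ∧ x.ev v ≤ x.od v + 1

/-- The run profile: how often each edge is traversed by the run procedure.
The train uses the even slot of `v` when the switch of `v` is in state `false`. -/
noncomputable def runProfile (A : Arrival V) : SFlow V where
  yard := 1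
  ev := fun v => {k : ℕ | (A.run k).1 = Sum.inl v ∧ (A.run k).2 v = false}.ncard
  od := fun v => {k : ℕ | (A.run k).1 = Sum.inl v ∧ (A.run k).2 v = true}.ncard


section ArrivalAux
open Finset
set_option linter.unusedSectionVars false

variable (A : Arrival V)

lemma run_succ (k : ℕ) : A.run (k+1) = A.runStep (A.run k) :=
  Function.iterate_succ_apply' _ _ _

lemma run_zero : A.run 0 = (Sum.inl A.o, fun _ => false) := rfl

lemma runStep_inr {s : (V ⊕ Bool) × (V → Bool)} {t : Bool} (h : s.1 = Sum.inr t) :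
    A.runStep s = s := by
  rcases s with ⟨p, g⟩
  dsimp at h; subst h; rfl

lemma run_stable {k : ℕ} {t : Bool} (h : (A.run k).1 = Sum.inr t) :
    ∀ m, k ≤ m → A.run m = A.run k := by
  intro m hm
  induction m with
  | zero => have : k = 0 := Nat.le_zero.mp hm; subst this; rfl
  | succ n ih =>
    rcases Nat.lt_or_ge k (n+1) with hlt | hge
    · have hkn : k ≤ n := by omega
      rw [run_succ, ih hkn, runStep_inr A h]
    · have : k = n + 1 := by omega
      subst this; rfl

lemma run_step_inl {k : ℕ} {v : V} (h : (A.run k).1 = Sum.inl v) :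
    (A.run (k+1)).1 = (if (A.run k).2 v then A.sOdd v else A.sEven v) ∧
    ∀ u, (A.run (k+1)).2 u = if u = v then !(A.run k).2 v else (A.run k).2 u := by
  rw [run_succ]
  rcases e : A.run k with ⟨p, g⟩
  rw [e] at h; dsimp at h; subst h
  constructor <;> simp [Arrival.runStep]

/-- number of visits to `v` before time `K` -/
def cvis (v : V) (K : ℕ) : ℕ :=
  ((Finset.range K).filter (fun k => (A.run k).1 = Sum.inl v)).card

/-- traversals of the even slot of `v` before time `K` -/
def cev (v : V) (K : ℕ) : ℕ :=
  ((Finset.range K).filter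
    (fun k => (A.run k).1 = Sum.inl v ∧ (A.run k).2 v = false)).card

/-- traversals of the odd slot of `v` before time `K` -/
def cod (v : V) (K : ℕ) : ℕ :=
  ((Finset.range K).filter
    (fun k => (A.run k).1 = Sum.inl v ∧ (A.run k).2 v = true)).card

lemma cvis_succ (v : V) (K : ℕ) :
    cvis A v (K+1) = cvis A v K + (if (A.run K).1 = Sum.inl v then 1 else 0) := by
  unfold cvis
  rw [Finset.range_add_one, Finset.filter_insert]
  split_ifs with h
  · rw [Finset.card_insert_of_notMem (by simp)]
  · simp

lemma cev_succ (v : V) (K : ℕ) :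
    cev A v (K+1) = cev A v K
      + (if (A.run K).1 = Sum.inl v ∧ (A.run K).2 v = false then 1 else 0) := by
  unfold cev
  rw [Finset.range_add_one, Finset.filter_insert]
  split_ifs with h
  · rw [Finset.card_insert_of_notMem (by simp)]
  · simp

lemma cod_succ (v : V) (K : ℕ) :
    cod A v (K+1) = cod A v K
      + (if (A.run K).1 = Sum.inl v ∧ (A.run K).2 v = true then 1 else 0) := by
  unfold cod
  rw [Finset.range_add_one, Finset.filter_insert]
  split_ifs with h
  · rw [Finset.card_insert_of_notMem (by simp)]
  · simp

lemma sw_eq (K : ℕ) (v : V) : (A.run K).2 v = decide (Odd (cvis A v K)) := by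
  induction K with
  | zero => simp [run_zero, cvis]
  | succ n ih =>
    rw [cvis_succ]
    rcases e : (A.run n).1 with w | t
    · obtain ⟨_, h2⟩ := run_step_inl A e
      rw [h2 v]
      by_cases hw : v = w
      · subst hw
        rw [if_pos rfl, if_pos rfl, ih]
        rcases Nat.even_or_odd (cvis A v n) with hp | hp
        · have ho1 : ¬ Odd (cvis A v n) := Nat.not_odd_iff_even.mpr hp
          have ho2 : Odd (cvis A v n + 1) := Nat.odd_add_one.mpr (Nat.not_odd_iff_even.mpr hp)
          simp [ho1, ho2]
        · have ho2 : ¬ Odd (cvis A v n + 1) :=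
            Nat.not_odd_iff_even.mpr (Nat.even_add_one.mpr (Nat.not_even_iff_odd.mpr hp))
          simp [hp, ho2]
      · have hne : ¬ ((Sum.inl w : V ⊕ Bool) = Sum.inl v) := by
          simp only [Sum.inl.injEq]; exact fun h => hw h.symm
        rw [if_neg hw, if_neg hne, add_zero]
        exact ih
    · have hne : ¬ ((Sum.inr t : V ⊕ Bool) = Sum.inl v) := by simp
      rw [run_succ, runStep_inr A e]
      rw [if_neg hne, add_zero]
      exact ih

lemma cev_cod (v : V) (K : ℕ) :
    cev A v K = (cvis A v K + 1) / 2 ∧ cod A v K = cvis A v K / 2 := by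
  induction K with
  | zero => simp [cev, cod, cvis]
  | succ n ih =>
    obtain ⟨ih1, ih2⟩ := ih
    rw [cev_succ, cod_succ, cvis_succ]
    have hs := sw_eq A n v
    by_cases h : (A.run n).1 = Sum.inl v
    · rcases Nat.even_or_odd (cvis A v n) with hp | hp
      · have hfalse : (A.run n).2 v = false := by
          rw [hs]; simp [Nat.not_odd_iff_even.mpr hp]
        obtain ⟨m, hm⟩ := hp
        simp only [h, hfalse, if_pos]
        simp only [true_and]
        norm_num
        omega
      · have htrue : (A.run n).2 v = true := by rw [hs]; simp [hp]
        obtain ⟨m, hm⟩ := hp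
        simp only [h, htrue, if_pos]
        simp only [true_and]
        norm_num
        omega
    · have h1 : ¬((A.run n).1 = Sum.inl v ∧ (A.run n).2 v = false) := fun hh => h hh.1
      have h2 : ¬((A.run n).1 = Sum.inl v ∧ (A.run n).2 v = true) := fun hh => h hh.1
      simp only [if_neg h, if_neg h1, if_neg h2, add_zero]
      exact ⟨ih1, ih2⟩

lemma conserve (v : V) (K : ℕ) :
    cvis A v (K+1) = (if A.o = v then 1 else 0)
      + ∑ w : V, ((if A.sEven w = Sum.inl v then cev A w K else 0)
          + (if A.sOdd w = Sum.inl v then cod A w K else 0)) := by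
  have key : ∀ n : ℕ, (if (A.run (n+1)).1 = Sum.inl v then (1:ℕ) else 0)
      = ∑ w : V, ((if A.sEven w = Sum.inl v then
            (if (A.run n).1 = Sum.inl w ∧ (A.run n).2 w = false then 1 else 0) else 0)
          + (if A.sOdd w = Sum.inl v then
            (if (A.run n).1 = Sum.inl w ∧ (A.run n).2 w = true then 1 else 0) else 0)) := by
    intro n
    rcases e : (A.run n).1 with w₀ | t
    · obtain ⟨h1, _⟩ := run_step_inl A e
      rw [Finset.sum_eq_single w₀]
      · rcases hb : (A.run n).2 w₀ with _ | _
        · rw [h1, hb]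
          simp [e, hb]
        · rw [h1, hb]
          simp [e, hb]
      · intro w _ hw
        have hne : w₀ ≠ w := fun h => hw h.symm
        simp [hne]
      · intro h; exact absurd (Finset.mem_univ w₀) h
    · rw [run_succ, runStep_inr A e]
      simp [e]
  induction K with
  | zero =>
    rw [cvis_succ]
    have h0 : (A.run 0).1 = Sum.inl A.o := rfl
    simp [cvis, cev, cod, h0]
  | succ n ih =>
    have expand : ∀ w : V,
        (if A.sEven w = Sum.inl v then cev A w (n+1) else 0)
          + (if A.sOdd w = Sum.inl v then cod A w (n+1) else 0)
        = ((if A.sEven w = Sum.inl v then cev A w n else 0)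
            + (if A.sOdd w = Sum.inl v then cod A w n else 0))
          + ((if A.sEven w = Sum.inl v then
              (if (A.run n).1 = Sum.inl w ∧ (A.run n).2 w = false then 1 else 0) else 0)
            + (if A.sOdd w = Sum.inl v then
              (if (A.run n).1 = Sum.inl w ∧ (A.run n).2 w = true then 1 else 0) else 0)) := by
      intro w
      rw [cev_succ, cod_succ]
      split_ifs <;> omega
    rw [cvis_succ, ih, key n, Finset.sum_congr rfl (fun w _ => expand w)]
    simp only [Finset.sum_add_distrib]
    ring

lemma succ_infinite {v : V} (hv : {k | (A.run k).1 = Sum.inl v}.Infinite)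
    {u : V ⊕ Bool} (hu : u = A.sEven v ∨ u = A.sOdd v) :
    {k | (A.run k).1 = u}.Infinite := by
  classical
  set p : ℕ → Prop := fun k => (A.run k).1 = Sum.inl v with hp
  have hpi : (setOf p).Infinite := hv
  have hcond : ∀ n : ℕ, ∀ hf : (setOf p).Finite, n < hf.toFinset.card :=
    fun n hf => absurd hf hpi
  have main : ∀ j : ℕ,
      (A.run (Nat.nth p j + 1)).1 = (if Odd j then A.sOdd v else A.sEven v) := by
    intro j
    have h1 : p (Nat.nth p j) := Nat.nth_mem_of_infinite hpi j
    have h2 : Nat.count p (Nat.nth p j) = j := Nat.count_nth (hcond j)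
    obtain ⟨hstep, _⟩ := run_step_inl A h1
    have hc : cvis A v (Nat.nth p j) = j := by
      unfold cvis
      rw [← Nat.count_eq_card_filter_range]
      exact h2
    rw [hstep, sw_eq, hc]
    by_cases hj : Odd j <;> simp [hj]
  apply Set.infinite_of_not_bddAbove
  rintro ⟨B, hB⟩
  rcases hu with hu | hu
  · set j := 2 * (B + 1) with hj
    have hjodd : ¬ Odd j := by rw [Nat.odd_iff]; omega
    have hmem : Nat.nth p j + 1 ∈ {k | (A.run k).1 = u} := by
      rw [Set.mem_setOf_eq, main j, if_neg hjodd, hu]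
    have := hB hmem
    have := Nat.le_nth (hcond j)
    omega
  · set j := 2 * (B + 1) + 1 with hj
    have hjodd : Odd j := by rw [Nat.odd_iff]; omega
    have hmem : Nat.nth p j + 1 ∈ {k | (A.run k).1 = u} := by
      rw [Set.mem_setOf_eq, main j, if_pos hjodd, hu]
    have := hB hmem
    have := Nat.le_nth (hcond j)
    omega

lemma reach : ∀ (m : ℕ) (u : V ⊕ Bool), {k | (A.run k).1 = u}.Infinite →
    A.PathLen u DestP m → ∃ N t, (A.run N).1 = Sum.inr t := by
  intro m
  induction m with
  | zero =>
    rintro u hu ⟨f, hf0, hfP, -⟩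
    obtain ⟨t, ht⟩ := hfP
    obtain ⟨k, hk⟩ := hu.nonempty
    exact ⟨k, t, by rw [hk, ← hf0, ht]⟩
  | succ m ih =>
    rintro u hu ⟨f, hf0, hfP, hfE⟩
    obtain ⟨x, hx, hsucc⟩ := hfE 0 (by omega)
    rw [hf0] at hx
    subst hx
    have hu' : {k | (A.run k).1 = f 1}.Infinite := succ_infinite A hu hsucc
    exact ih (f 1) hu' ⟨fun i => f (i + 1), rfl, hfP, fun i hi => hfE (i + 1) (by omega)⟩

lemma exists_term (hA : A.Terminating) : ∃ N t, (A.run N).1 = Sum.inr t := by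
  by_contra h
  push_neg at h
  have hg : ∀ k, ∃ v, (A.run k).1 = Sum.inl v := by
    intro k
    rcases e : (A.run k).1 with v | t
    · exact ⟨v, rfl⟩
    · exact absurd e (h k t)
  choose g hgs using hg
  obtain ⟨v₀, hv₀⟩ := Finite.exists_infinite_fiber g
  have hinf : {k | (A.run k).1 = Sum.inl v₀}.Infinite := by
    apply Set.Infinite.mono (s := g ⁻¹' {v₀})
    · intro k hk
      rw [Set.mem_setOf_eq, hgs k, Set.mem_preimage, Set.mem_singleton_iff] at *
      rw [hk]
    · exact Set.infinite_coe_iff.mp hv₀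
  obtain ⟨m, pm⟩ := hA v₀
  obtain ⟨N, t, hNt⟩ := reach A m (Sum.inl v₀) hinf pm
  exact h N t hNt

lemma set_eq_filter {N : ℕ} {t : Bool} (hN : (A.run N).1 = Sum.inr t) (v : V) (b : Bool) :
    {k : ℕ | (A.run k).1 = Sum.inl v ∧ (A.run k).2 v = b}
      = ↑((Finset.range N).filter
          (fun k => (A.run k).1 = Sum.inl v ∧ (A.run k).2 v = b)) := by
  ext k
  simp only [Set.mem_setOf_eq, Finset.coe_filter, Finset.mem_range, Set.mem_setOf_eq]
  constructor
  · intro hk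
    refine ⟨?_, hk⟩
    by_contra hlt
    have hst := run_stable A hN k (by omega)
    rw [hst, hN] at hk
    exact absurd hk.1 (by simp)
  · tauto

lemma profile_eq {N : ℕ} {t : Bool} (hN : (A.run N).1 = Sum.inr t) (v : V) :
    (runProfile A).ev v = cev A v N ∧ (runProfile A).od v = cod A v N := by
  constructor
  · show ({k : ℕ | (A.run k).1 = Sum.inl v ∧ (A.run k).2 v = false}).ncard = _
    rw [set_eq_filter A hN v false, Set.ncard_coe_finset]
    rfl
  · show ({k : ℕ | (A.run k).1 = Sum.inl v ∧ (A.run k).2 v = true}).ncard = _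
    rw [set_eq_filter A hN v true, Set.ncard_coe_finset]
    rfl

lemma flow_bound {x : SFlow V} (hx : IsSwitchingFlow A x) :
    ∀ (K : ℕ) (v : V), cev A v K ≤ x.ev v ∧ cod A v K ≤ x.od v := by
  obtain ⟨hy, hc, hs⟩ := hx
  intro K
  induction K with
  | zero => intro v; simp [cev, cod]
  | succ n ih =>
    intro v
    have hin : cvis A v (n+1) ≤ x.ev v + x.od v := by
      have hmain := hc v
      unfold SFlow.out SFlow.into at hmain
      rw [conserve A v n, hmain]
      refine add_le_add ?_ (Finset.sum_le_sum fun w _ => ?_)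
      · rw [hy]
        by_cases h : A.o = v
        · rw [if_pos h, if_pos (by rw [h])]
        · rw [if_neg h, if_neg (by simp [h])]
      · have h1 := (ih w).1
        have h2 := (ih w).2
        split_ifs <;> omega
    have h1 := cev_cod A v (n+1)
    have hsv := hs v
    omega

end ArrivalAux

lemma sflow_ext {x y : SFlow V} (h1 : x.yard = y.yard) (h2 : x.ev = y.ev)
    (h3 : x.od = y.od) : x = y := by
  cases x; cases y; simp_all


/-- The run profile is a switching flow, it is componentwise below every switching flow,
and it is the unique minimizer of the total flow among switching flows. -/
theorem run_profile_minimal_switching_flow (A : Arrival V) (hA : A.Terminating) :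
    IsSwitchingFlow A (runProfile A) ∧
    (∀ x : SFlow V, IsSwitchingFlow A x →
      (runProfile A).yard ≤ x.yard ∧
        ∀ v : V, (runProfile A).ev v ≤ x.ev v ∧ (runProfile A).od v ≤ x.od v) ∧
    ∀ x : SFlow V, IsSwitchingFlow A x →
      (runProfile A).total ≤ x.total ∧ (x.total = (runProfile A).total → x = runProfile A) := by
  classical
  obtain ⟨N, t, hN⟩ := exists_term A hA
  have hpe : ∀ v, (runProfile A).ev v = cev A v N := fun v => (profile_eq A hN v).1
  have hpo : ∀ v, (runProfile A).od v = cod A v N := fun v => (profile_eq A hN v).2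
  have hyard : (runProfile A).yard = 1 := rfl
  have hcvisN : ∀ v, cvis A v (N+1) = cvis A v N := by
    intro v
    have hne : ¬((A.run N).1 = Sum.inl v) := by rw [hN]; simp
    rw [cvis_succ, if_neg hne, add_zero]
  have hsplit : ∀ v K, cev A v K + cod A v K = cvis A v K := by
    intro v K; have := cev_cod A v K; omega
  have hflow : IsSwitchingFlow A (runProfile A) := by
    refine ⟨rfl, ?_, ?_⟩
    · intro v
      unfold SFlow.out SFlow.into
      rw [hpe v, hpo v, hsplit v N, ← hcvisN v, conserve A v N]
      refine congrArg₂ (· + ·) ?_ (Finset.sum_congr rfl fun w _ => ?_)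
      · rw [hyard]
        by_cases h : A.o = v
        · rw [if_pos h, if_pos (by rw [h])]
        · rw [if_neg h, if_neg (by simp [h])]
      · rw [hpe w, hpo w]
    · intro v
      rw [hpe v, hpo v]
      have := cev_cod A v N
      omega
  have hcompAll : ∀ x : SFlow V, IsSwitchingFlow A x →
      ∀ v, (runProfile A).ev v ≤ x.ev v ∧ (runProfile A).od v ≤ x.od v := by
    intro x hx v
    rw [hpe v, hpo v]
    exact flow_bound A hx N v
  refine ⟨hflow, ?_, ?_⟩
  · intro x hx
    exact ⟨by rw [hyard, hx.1], hcompAll x hx⟩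
  · intro x hx
    have hcomp := hcompAll x hx
    have hx1 := hx.1
    constructor
    · unfold SFlow.total
      refine add_le_add (by rw [hyard, hx1]) (Finset.sum_le_sum fun v _ => ?_)
      have := hcomp v; omega
    · intro htot
      have hterm : ∀ v, x.ev v + x.od v = (runProfile A).ev v + (runProfile A).od v := by
        by_contra hne
        push_neg at hne
        obtain ⟨v, hv⟩ := hne
        have hstrict : ∑ w : V, ((runProfile A).ev w + (runProfile A).od w)
            < ∑ w : V, (x.ev w + x.od w) :=
          Finset.sum_lt_sum (fun w _ => by have := hcomp w; omega)
            ⟨v, Finset.mem_univ v, by have := hcomp v; omega⟩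
        unfold SFlow.total at htot
        rw [hx1, hyard] at htot
        omega
      have hev : ∀ v, x.ev v = (runProfile A).ev v := by
        intro v; have := hcomp v; have := hterm v; omega
      have hod : ∀ v, x.od v = (runProfile A).od v := by
        intro v; have := hcomp v; have := hterm v; omega
      exact sflow_ext (by rw [hx1, hyard]) (funext hev) (funext hod)
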